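/- arXiv:2411.07770 — 3 statements merged into one kernel-verified Lean document; each statement's English description precedes it below -/
import Mathlib

section
/- If s₊ ≥ 0, then Σ_{i∈I} log(1 + exp(s_i - s₊)) ≤ log(1 + exp(-s₊)) + Σ_{i∈I} log(1 + exp(s_i)). -/
open Real

lemma Real.log_one_add_exp_nonneg (x : ℝ) : 0 ≤ log (1 + exp x) :=
  log_nonneg (le_add_of_nonneg_right (exp_pos x).le)

lemma Real.monotone_log_one_add_exp : Monotone fun x : ℝ => log (1 + exp x) :=
  fun _ _ hxy => by dsimp only; gcongr

theorem stmt_4 {ι : Type*} (I : Finset ι) (s : ι → ℝ) (spos : ℝ) (hpos : 0 ≤ spos) :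
    ∑ i ∈ I, Real.log (1 + Real.exp (s i - spos)) ≤
      Real.log (1 + Real.exp (-spos)) + ∑ i ∈ I, Real.log (1 + Real.exp (s i)) :=
  calc ∑ i ∈ I, log (1 + exp (s i - spos))
      ≤ ∑ i ∈ I, log (1 + exp (s i)) :=
        Finset.sum_le_sum fun _ _ => monotone_log_one_add_exp (sub_le_self _ hpos)
    _ ≤ log (1 + exp (-spos)) + ∑ i ∈ I, log (1 + exp (s i)) :=
        le_add_of_nonneg_left (log_one_add_exp_nonneg _)
end

section
/- Let r₊ = 1 + |{i ∈ I : s_i ≥ s₊}| be the rank of the positive item. Then -log(1/log₂(1+r₊)) ≤ log(1 + Σ_{i∈I} exp(s_i - s₊)); that is, -log NDCG(r₊) ≤ ℓ_CCE. -/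
/-!
Every negative item scoring at least as high as the positive one contributes a term
`exp (s i - s₊) ≥ 1` to the sum, so `r₊ ≤ 1 + ∑ i, exp (s i - s₊)`. On the other side
`-log NDCG(r₊) = log (log₂ (1 + r₊))` and `log₂ (1 + n) ≤ n` because `1 + n ≤ 2 ^ n`;
monotonicity of `log` finishes the proof.
-/

open Finset Real

theorem Finset.card_filter_le_sum_of_one_le {ι R : Type*} [Semiring R] [PartialOrder R]
    [IsOrderedRing R] (t : Finset ι) (p : ι → Prop) [DecidablePred p] {f : ι → R}
    (hf : ∀ i ∈ t, 0 ≤ f i) (hp : ∀ i ∈ t, p i → 1 ≤ f i) :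
    ((t.filter p).card : R) ≤ ∑ i ∈ t, f i :=
  calc ((t.filter p).card : R) = ∑ _i ∈ t.filter p, (1 : R) := by simp
    _ ≤ ∑ i ∈ t.filter p, f i :=
      sum_le_sum fun i hi => hp i (mem_filter.1 hi).1 (mem_filter.1 hi).2
    _ ≤ ∑ i ∈ t, f i := sum_le_sum_of_subset_of_nonneg (filter_subset p t) fun i hi _ => hf i hi

theorem Real.logb_two_one_add_natCast_le (n : ℕ) : logb 2 (1 + n) ≤ n := by
  rw [logb_le_iff_le_rpow one_lt_two (by positivity), rpow_natCast]
  exact_mod_cast (add_comm 1 n ▸ n.lt_two_pow_self : 1 + n ≤ 2 ^ n)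

theorem stmt_5 {ι : Type*} (I : Finset ι) (s : ι → ℝ) (spos : ℝ)
    (rpos : ℕ) (hr : rpos = 1 + (I.filter (fun i => spos ≤ s i)).card) :
    -Real.log (1 / Real.logb 2 (1 + (rpos : ℝ))) ≤
      Real.log (1 + ∑ i ∈ I, Real.exp (s i - spos)) := by
  have hrank : (1 : ℝ) ≤ rpos := by exact_mod_cast hr ▸ Nat.le_add_right 1 _
  have hlogb_pos : 0 < logb 2 (1 + (rpos : ℝ)) := logb_pos one_lt_two (by linarith)
  have hrank_le : (rpos : ℝ) ≤ 1 + ∑ i ∈ I, exp (s i - spos) := by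
    rw [hr, Nat.cast_add, Nat.cast_one]
    gcongr
    exact I.card_filter_le_sum_of_one_le _ (fun i _ => (exp_pos _).le)
      fun i _ hi => one_le_exp (sub_nonneg.2 hi)
  rw [one_div, log_inv, neg_neg]
  exact log_le_log hlogb_pos ((logb_two_one_add_natCast_le rpos).trans hrank_le)
end

section
/- Fix scores on a finite population I⁻ with s₊ ∈ ℝ, and let K be a uniformly random k-element subset of I⁻. Then P(-log NDCG(r₊) ≤ ℓ_CCE(K)) ≥ P(|Γ^K| ≥ log₂(1 + r₊)), where r₊ = 1 + |{i ∈ I⁻ : s_i ≥ s₊}|. -/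
/-! Every `i ∈ Γ^K` contributes `e^{s_i - s₊} ≥ 1` to the sum in `ℓ_CCE(K)`, so
`|Γ^K| ≤ Σ_{i∈K} e^{s_i - s₊}`; hence the event `log₂(1 + r₊) ≤ |Γ^K|` is contained in the event
`-log NDCG(r₊) = log log₂(1 + r₊) ≤ ℓ_CCE(K)`. -/

open Finset Real

lemma card_filter_le_le_sum_exp_sub {ι : Type*} (K : Finset ι) (s : ι → ℝ) (t : ℝ) :
    (#(K.filter (fun i => t ≤ s i)) : ℝ) ≤ ∑ i ∈ K, exp (s i - t) := by
  rw [natCast_card_filter]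
  refine sum_le_sum fun i _ => ?_
  split_ifs with h
  · exact one_le_exp (sub_nonneg.2 h)
  · exact (exp_pos _).le

lemma log_le_log_one_add {x y : ℝ} (hx : 0 ≤ x) (hxy : x ≤ y) : log x ≤ log (1 + y) := by
  rcases hx.eq_or_lt with rfl | hx
  · simpa using log_nonneg (by linarith : (1 : ℝ) ≤ 1 + y)
  · exact log_le_log hx (by linarith)

lemma card_filter_div_le_card_filter_div {α : Type*} (S : Finset α) {p q : α → Prop}
    [DecidablePred p] [DecidablePred q] (hpq : ∀ a ∈ S, p a → q a) (n : ℕ) :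
    (#(S.filter p) : ℝ) / n ≤ #(S.filter q) / n :=
  div_le_div_of_nonneg_right (mod_cast card_le_card (monotone_filter_right S hpq))
    n.cast_nonneg

theorem stmt_12_general {ι : Type*} (Iminus : Finset ι) (s : ι → ℝ) (spos : ℝ)
    (k : ℕ) (rpos : ℕ) :
    ((((Iminus.powersetCard k).filter
        (fun K => Real.logb 2 (1 + (rpos : ℝ)) ≤
          ((K.filter (fun i => spos ≤ s i)).card : ℝ))).card : ℝ) /
      (Iminus.card.choose k : ℝ)) ≤
    ((((Iminus.powersetCard k).filter
        (fun K => -Real.log (1 / Real.logb 2 (1 + (rpos : ℝ))) ≤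
          Real.log (1 + ∑ i ∈ K, Real.exp (s i - spos)))).card : ℝ) /
      (Iminus.card.choose k : ℝ)) := by
  refine card_filter_div_le_card_filter_div _ (fun K _ hK => ?_) _
  have hL : 0 ≤ logb 2 (1 + (rpos : ℝ)) := logb_nonneg one_lt_two (by simp)
  rw [one_div, log_inv, neg_neg]
  exact log_le_log_one_add hL (hK.trans (card_filter_le_le_sum_exp_sub K s spos))

/-- Probability (over a uniformly random `k`-subset `K` of `Iminus`) that
`-log NDCG(r₊) ≤ ℓ_CCE(K)` is at least the probability that
`|Γ^K| ≥ log₂(1 + r₊)`. -/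
theorem stmt_12 {ι : Type*} [DecidableEq ι] (Iminus : Finset ι) (s : ι → ℝ) (spos : ℝ)
    (k : ℕ) (rpos : ℕ) (hr : rpos = 1 + (Iminus.filter (fun i => spos ≤ s i)).card) :
    ((((Iminus.powersetCard k).filter
        (fun K => Real.logb 2 (1 + (rpos : ℝ)) ≤
          ((K.filter (fun i => spos ≤ s i)).card : ℝ))).card : ℝ) /
      (Iminus.card.choose k : ℝ)) ≤
    ((((Iminus.powersetCard k).filter
        (fun K => -Real.log (1 / Real.logb 2 (1 + (rpos : ℝ))) ≤
          Real.log (1 + ∑ i ∈ K, Real.exp (s i - spos)))).card : ℝ) /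
      (Iminus.card.choose k : ℝ)) :=
  stmt_12_general Iminus s spos k rpos
end
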